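/- Let H be a Hilbert space, Φ = [φ₁, …, φ_n] with φ_i ∈ H, and let P_Φ be the orthogonal projection onto span{φ₁,…,φ_n}. For w̄ ∈ H define y(x) := ⟨φ(x), w̄⟩ and f_KR(x) := ⟨φ(x), P_Φ w̄⟩ where φ(x) ∈ H. Then for any probability measure on x, E_x (y(x) − f_KR(x))² = ⟨(I − P_Φ) w̄, Σ (I − P_Φ) w̄⟩ where Σ := E_x [φ(x) ⊗ φ(x)] is the (uncentered) covariance operator, and in particular E_x(y − f_KR)² ≤ ∥w̄∥² · ∥(I − P_Φ) Σ (I − P_Φ)∥. -/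

import Mathlib

open MeasureTheory
open scoped RealInnerProductSpace

/-!
The residual `y − f_KR` is `x ↦ ⟪φ x, (I − P) w̄⟫`, so its second moment is the quadratic form of
`Σ` at `(I − P) w̄`. Since `I − P` is symmetric, this equals `⟪w̄, (I − P) Σ (I − P) w̄⟫`, which
Cauchy–Schwarz bounds by `‖w̄‖² ‖(I − P) Σ (I − P)‖`.
-/

theorem integral_inner_sq_eq_inner_apply
    {H : Type*} [NormedAddCommGroup H] [InnerProductSpace ℝ H]
    {Ω : Type*} [MeasurableSpace Ω] {μ : Measure Ω} {φ : Ω → H} {S : H →L[ℝ] H}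
    (hS : ∀ u v : H, ⟪u, S v⟫ = ∫ ω, ⟪φ ω, u⟫ * ⟪φ ω, v⟫ ∂μ) (u : H) :
    ∫ ω, ⟪φ ω, u⟫ ^ 2 ∂μ = ⟪u, S u⟫ := by
  simp_rw [hS, sq]

theorem real_inner_apply_self_le_norm_sq_mul_opNorm
    {H : Type*} [NormedAddCommGroup H] [InnerProductSpace ℝ H] (T : H →L[ℝ] H) (w : H) :
    ⟪w, T w⟫ ≤ ‖w‖ ^ 2 * ‖T‖ :=
  calc ⟪w, T w⟫ ≤ ‖w‖ * ‖T w‖ := real_inner_le_norm _ _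
    _ ≤ ‖w‖ * (‖T‖ * ‖w‖) := by gcongr; exact T.le_opNorm w
    _ = ‖w‖ ^ 2 * ‖T‖ := by ring

theorem kernel_regression_generalization
    {H : Type*} [NormedAddCommGroup H] [InnerProductSpace ℝ H]
    {Ω : Type*} [MeasurableSpace Ω] (μ : Measure Ω)
    (φ : Ω → H) (wbar : H)
    (P : H →L[ℝ] H)
    (hPsa : ∀ u v : H, (inner ℝ (P u) v : ℝ) = inner ℝ u (P v))
    (Sop : H →L[ℝ] H)
    (hSop : ∀ u v : H, (inner ℝ u (Sop v) : ℝ) =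
        ∫ ω, (inner ℝ (φ ω) u : ℝ) * (inner ℝ (φ ω) v : ℝ) ∂μ) :
    (∫ ω, ((inner ℝ (φ ω) wbar : ℝ) - (inner ℝ (φ ω) (P wbar) : ℝ)) ^ 2 ∂μ)
        = (inner ℝ (wbar - P wbar) (Sop (wbar - P wbar)) : ℝ) ∧
      (∫ ω, ((inner ℝ (φ ω) wbar : ℝ) - (inner ℝ (φ ω) (P wbar) : ℝ)) ^ 2 ∂μ)
        ≤ ‖wbar‖ ^ 2 *
            ‖(ContinuousLinearMap.id ℝ H - P).comp
              (Sop.comp (ContinuousLinearMap.id ℝ H - P))‖ := by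
  have hresidual : ∀ ω, ⟪φ ω, wbar⟫ - ⟪φ ω, P wbar⟫ = ⟪φ ω, wbar - P wbar⟫ :=
    fun ω => (inner_sub_right _ _ _).symm
  have herror : ∫ ω, (⟪φ ω, wbar⟫ - ⟪φ ω, P wbar⟫) ^ 2 ∂μ
      = ⟪wbar - P wbar, Sop (wbar - P wbar)⟫ := by
    simp_rw [hresidual]
    exact integral_inner_sq_eq_inner_apply hSop _
  have hQ : ((ContinuousLinearMap.id ℝ H - P : H →L[ℝ] H) : H →ₗ[ℝ] H).IsSymmetric :=
    LinearMap.IsSymmetric.id.sub hPsa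
  refine ⟨herror, herror ▸ ?_⟩
  calc ⟪wbar - P wbar, Sop (wbar - P wbar)⟫
      = ⟪wbar, ((ContinuousLinearMap.id ℝ H - P).comp
          (Sop.comp (ContinuousLinearMap.id ℝ H - P))) wbar⟫ := hQ _ _
    _ ≤ _ := real_inner_apply_self_le_norm_sq_mul_opNorm _ _
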